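/- arXiv:2104.10206 — 2 statements merged into one kernel-verified Lean document; each statement's English description precedes it below -/
import Mathlib

section
/- For a closure space (X, c), let qd(c) be the quasi-discrete closure qd(c)(A) := ⋃_{x∈A} c({x}). Given a quasi-discrete closure space (X, c) and an arbitrary closure space (Y, d), a set map f : X → Y is continuous as a map (X,c) → (Y, qd(d)) if and only if it is continuous as a map (X,c) → (Y,d). (That is, qd is right adjoint to the inclusion of quasi-discrete closure spaces into closure spaces.) -/
open Set

theorem monotone_of_map_union {Y : Type*} {d : Set Y → Set Y}
    (hd : ∀ A B : Set Y, d (A ∪ B) = d A ∪ d B) : Monotone d := by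
  intro A B hAB
  calc d A ⊆ d A ∪ d B := subset_union_left
    _ = d B := by rw [← hd, union_eq_self_of_subset_left hAB]

theorem Monotone.biUnion_singleton_subset {Y : Type*} {d : Set Y → Set Y} (hd : Monotone d)
    (S : Set Y) : ⋃ y ∈ S, d {y} ⊆ d S :=
  iUnion₂_subset fun _ hy => hd (singleton_subset_iff.2 hy)

theorem qd_adjunction_general {X Y : Type*}
    (c : Set X → Set X) (d : Set Y → Set Y)
    (hcqd : ∀ A : Set X, c A = ⋃ x ∈ A, c {x})
    (hd3 : ∀ A B : Set Y, d (A ∪ B) = d A ∪ d B)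
    (f : X → Y) :
    (∀ A : Set X, f '' c A ⊆ ⋃ y ∈ f '' A, d {y}) ↔
    (∀ A : Set X, f '' c A ⊆ d (f '' A)) := by
  refine ⟨fun h A => (h A).trans ((monotone_of_map_union hd3).biUnion_singleton_subset _),
    fun h A => ?_⟩
  -- quasi-discreteness of `c` reduces continuity into `qd d` to singletons
  rw [hcqd, image_iUnion₂, biUnion_image]
  exact iUnion₂_mono fun x _ => by simpa only [image_singleton] using h {x}

/-- The quasi-discrete modification is right adjoint to the inclusion of
quasi-discrete closure spaces: for (X,c) quasi-discrete, a map f is continuous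
into (Y, qd(d)) iff it is continuous into (Y, d). -/
theorem qd_adjunction {X Y : Type*}
    (c : Set X → Set X) (d : Set Y → Set Y)
    (hc1 : c ∅ = ∅) (hc2 : ∀ A : Set X, A ⊆ c A)
    (hc3 : ∀ A B : Set X, c (A ∪ B) = c A ∪ c B)
    (hcqd : ∀ A : Set X, c A = ⋃ x ∈ A, c {x})
    (hd1 : d ∅ = ∅) (hd2 : ∀ A : Set Y, A ⊆ d A)
    (hd3 : ∀ A B : Set Y, d (A ∪ B) = d A ∪ d B)
    (f : X → Y) :
    (∀ A : Set X, f '' c A ⊆ ⋃ y ∈ f '' A, d {y}) ↔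
    (∀ A : Set X, f '' c A ⊆ d (f '' A)) :=
  qd_adjunction_general c d hcqd hd3 f
end

section
/- For a quasi-discrete closure space (X, c), define s(c)(A) := ⋃_{x∈A} {y ∈ c({x}) : x ∈ c({y})}. Then s(c) is a quasi-discrete closure operation which is symmetric (y ∈ s(c)({x}) implies x ∈ s(c)({y})), s(c) is finer than c, and for (X,c) symmetric quasi-discrete and (Y,d) quasi-discrete, f : X → Y is continuous from (X,c) to (Y, s(d)) iff it is continuous from (X,c) to (Y,d). -/
/-!
Everything reduces to points: for a quasi-discrete closure, `y ∈ c A` iff `y ∈ c {x}` for some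
`x ∈ A`, and `s(c)` keeps exactly the symmetric part of the relation `y ∈ c {x}`. For the
adjunction, a map continuous into `d` sends the symmetric relation of `c` into the relation of
`d` in both directions, hence into its symmetric part.
-/

open Set

section SymmClosure

variable {X Y : Type*}

def symmClosure (c : Set X → Set X) (A : Set X) : Set X :=
  ⋃ x ∈ A, {y | y ∈ c {x} ∧ x ∈ c {y}}

def ClosureContinuous (c : Set X → Set X) (d : Set Y → Set Y) (f : X → Y) : Prop :=
  ∀ A : Set X, f '' c A ⊆ d (f '' A)

variable {c : Set X → Set X}

theorem mem_symmClosure_singleton {x y : X} :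
    y ∈ symmClosure c {x} ↔ y ∈ c {x} ∧ x ∈ c {y} := by
  simp [symmClosure]

theorem symmClosure_empty : symmClosure c ∅ = ∅ := by
  simp [symmClosure]

theorem subset_symmClosure (hc : ∀ A : Set X, A ⊆ c A) (A : Set X) : A ⊆ symmClosure c A :=
  fun x hx => mem_biUnion hx ⟨hc {x} rfl, hc {x} rfl⟩

theorem symmClosure_union (A B : Set X) :
    symmClosure c (A ∪ B) = symmClosure c A ∪ symmClosure c B :=
  biUnion_union A B _

theorem symmClosure_eq_biUnion_singleton (A : Set X) :
    symmClosure c A = ⋃ x ∈ A, symmClosure c {x} := by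
  simp [symmClosure]

theorem mem_symmClosure_singleton_comm {x y : X} (h : y ∈ symmClosure c {x}) :
    x ∈ symmClosure c {y} :=
  mem_symmClosure_singleton.2 (mem_symmClosure_singleton.1 h).symm

theorem symmClosure_subset (hc : Monotone c) (A : Set X) : symmClosure c A ⊆ c A := by
  simp only [symmClosure, iUnion_subset_iff]
  exact fun x hx y hy => hc (singleton_subset_iff.2 hx) hy.1

theorem monotone_of_eq_biUnion_singleton (hc : ∀ A : Set X, c A = ⋃ x ∈ A, c {x}) :
    Monotone c := by
  intro A B hAB
  rw [hc A, hc B]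
  exact biUnion_subset_biUnion_left hAB

theorem ClosureContinuous.mono {d d' : Set Y → Set Y} {f : X → Y}
    (hf : ClosureContinuous c d f) (hd : ∀ B, d B ⊆ d' B) : ClosureContinuous c d' f :=
  fun A => (hf A).trans (hd _)

theorem ClosureContinuous.apply_mem_singleton {d : Set Y → Set Y} {f : X → Y}
    (hf : ClosureContinuous c d f) {x x' : X} (hx' : x' ∈ c {x}) : f x' ∈ d {f x} := by
  simpa only [image_singleton] using hf {x} (mem_image_of_mem f hx')

theorem closureContinuous_symmClosure_iff (hcqd : ∀ A : Set X, c A = ⋃ x ∈ A, c {x})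
    (hsymm : ∀ x y : X, y ∈ c {x} → x ∈ c {y}) {d : Set Y → Set Y}
    (hdqd : ∀ B : Set Y, d B = ⋃ y ∈ B, d {y}) (f : X → Y) :
    ClosureContinuous c (symmClosure d) f ↔ ClosureContinuous c d f := by
  refine ⟨fun hf => hf.mono (symmClosure_subset (monotone_of_eq_biUnion_singleton hdqd)),
    fun hf A => ?_⟩
  rintro _ ⟨x', hx', rfl⟩
  rw [hcqd A] at hx'
  obtain ⟨x, hxA, hx'x⟩ := mem_iUnion₂.1 hx'
  exact mem_biUnion (mem_image_of_mem f hxA)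
    ⟨hf.apply_mem_singleton hx'x, hf.apply_mem_singleton (hsymm x x' hx'x)⟩

end SymmClosure

theorem symmetrization_general {X : Type*} (c : Set X → Set X)
    (hc2 : ∀ A : Set X, A ⊆ c A)
    (hcqd : ∀ A : Set X, c A = ⋃ x ∈ A, c {x}) :
    -- s(c) is a closure operation
    ((⋃ x ∈ (∅ : Set X), {y | y ∈ c {x} ∧ x ∈ c {y}}) = ∅) ∧
    (∀ A : Set X, A ⊆ ⋃ x ∈ A, {y | y ∈ c {x} ∧ x ∈ c {y}}) ∧
    (∀ A B : Set X, (⋃ x ∈ A ∪ B, {y | y ∈ c {x} ∧ x ∈ c {y}}) =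
      (⋃ x ∈ A, {y | y ∈ c {x} ∧ x ∈ c {y}}) ∪ ⋃ x ∈ B, {y | y ∈ c {x} ∧ x ∈ c {y}}) ∧
    -- s(c) is quasi-discrete
    (∀ A : Set X, (⋃ x ∈ A, {y | y ∈ c {x} ∧ x ∈ c {y}}) =
      ⋃ x ∈ A, ⋃ z ∈ ({x} : Set X), {y | y ∈ c {z} ∧ z ∈ c {y}}) ∧
    -- s(c) is symmetric
    (∀ x y : X, (y ∈ ⋃ z ∈ ({x} : Set X), {w | w ∈ c {z} ∧ z ∈ c {w}}) →
      x ∈ ⋃ z ∈ ({y} : Set X), {w | w ∈ c {z} ∧ z ∈ c {w}}) ∧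
    -- s(c) is finer than c
    (∀ A : Set X, (⋃ x ∈ A, {y | y ∈ c {x} ∧ x ∈ c {y}}) ⊆ c A) ∧
    -- adjunction: for (X,c) symmetric quasi-discrete, (Y,d) quasi-discrete,
    -- f : (X,c) → (Y,s(d)) is continuous iff f : (X,c) → (Y,d) is continuous
    ((∀ x y : X, y ∈ c {x} → x ∈ c {y}) →
      ∀ (Y : Type u_1) (d : Set Y → Set Y), d ∅ = ∅ → (∀ A : Set Y, A ⊆ d A) →
        (∀ A B : Set Y, d (A ∪ B) = d A ∪ d B) →
        (∀ A : Set Y, d A = ⋃ y ∈ A, d {y}) →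
        ∀ f : X → Y,
          ((∀ A : Set X, f '' c A ⊆ ⋃ y ∈ f '' A, {z | z ∈ d {y} ∧ y ∈ d {z}}) ↔
            (∀ A : Set X, f '' c A ⊆ d (f '' A)))) :=
  ⟨symmClosure_empty, subset_symmClosure hc2, symmClosure_union,
    symmClosure_eq_biUnion_singleton, fun _ _ => mem_symmClosure_singleton_comm,
    symmClosure_subset (monotone_of_eq_biUnion_singleton hcqd),
    fun hsymm _ _ _ _ _ hdqd => closureContinuous_symmClosure_iff hcqd hsymm hdqd⟩

/-- The symmetrization of a quasi-discrete closure operation: it is a symmetric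
quasi-discrete closure operation finer than the original, and it is right
adjoint to the inclusion of symmetric quasi-discrete closure spaces. -/
theorem symmetrization {X : Type*} (c : Set X → Set X)
    (hc1 : c ∅ = ∅) (hc2 : ∀ A : Set X, A ⊆ c A)
    (hc3 : ∀ A B : Set X, c (A ∪ B) = c A ∪ c B)
    (hcqd : ∀ A : Set X, c A = ⋃ x ∈ A, c {x}) :
    -- s(c) is a closure operation
    ((⋃ x ∈ (∅ : Set X), {y | y ∈ c {x} ∧ x ∈ c {y}}) = ∅) ∧
    (∀ A : Set X, A ⊆ ⋃ x ∈ A, {y | y ∈ c {x} ∧ x ∈ c {y}}) ∧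
    (∀ A B : Set X, (⋃ x ∈ A ∪ B, {y | y ∈ c {x} ∧ x ∈ c {y}}) =
      (⋃ x ∈ A, {y | y ∈ c {x} ∧ x ∈ c {y}}) ∪ ⋃ x ∈ B, {y | y ∈ c {x} ∧ x ∈ c {y}}) ∧
    -- s(c) is quasi-discrete
    (∀ A : Set X, (⋃ x ∈ A, {y | y ∈ c {x} ∧ x ∈ c {y}}) =
      ⋃ x ∈ A, ⋃ z ∈ ({x} : Set X), {y | y ∈ c {z} ∧ z ∈ c {y}}) ∧
    -- s(c) is symmetric
    (∀ x y : X, (y ∈ ⋃ z ∈ ({x} : Set X), {w | w ∈ c {z} ∧ z ∈ c {w}}) →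
      x ∈ ⋃ z ∈ ({y} : Set X), {w | w ∈ c {z} ∧ z ∈ c {w}}) ∧
    -- s(c) is finer than c
    (∀ A : Set X, (⋃ x ∈ A, {y | y ∈ c {x} ∧ x ∈ c {y}}) ⊆ c A) ∧
    -- adjunction: for (X,c) symmetric quasi-discrete, (Y,d) quasi-discrete,
    -- f : (X,c) → (Y,s(d)) is continuous iff f : (X,c) → (Y,d) is continuous
    ((∀ x y : X, y ∈ c {x} → x ∈ c {y}) →
      ∀ (Y : Type u_1) (d : Set Y → Set Y), d ∅ = ∅ → (∀ A : Set Y, A ⊆ d A) →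
        (∀ A B : Set Y, d (A ∪ B) = d A ∪ d B) →
        (∀ A : Set Y, d A = ⋃ y ∈ A, d {y}) →
        ∀ f : X → Y,
          ((∀ A : Set X, f '' c A ⊆ ⋃ y ∈ f '' A, {z | z ∈ d {y} ∧ y ∈ d {z}}) ↔
            (∀ A : Set X, f '' c A ⊆ d (f '' A)))) :=
  symmetrization_general c hc2 hcqd
end
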